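/- Let G be a topological group, N a closed normal subgroup, and suppose every continuous action of N on a compact Hausdorff space has an N-invariant probability measure, and likewise for G/N. Then every continuous action of G on a compact Hausdorff space has a G-invariant probability measure. (Extension of amenability: if N and G/N are amenable, then G is amenable.) -/

import Mathlib

/-!
The states of `C(K, ℝ)` form a weak-* compact set on which `G` acts continuously, the uniform
bound `‖φ‖ ≤ 1` turning weak-* continuity into joint continuity. Amenability of `N` gives an
`N`-invariant probability measure on the states, whose barycenter is an `N`-invariant state.
Hence the `N`-fixed states form a nonempty compact space, on which `G` acts through `G ⧸ N`;
amenability of `G ⧸ N` and a second barycenter give a `G`-invariant state, and the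
Riesz–Markov–Kakutani theorem turns it into a `G`-invariant probability measure on `K`.
-/

/-- A topological group is amenable if every continuous action on a nonempty compact
Hausdorff space admits an invariant Borel probability measure. -/
def IsAmenable (G : Type*) [Group G] [TopologicalSpace G] : Prop :=
  ∀ (K : Type) [TopologicalSpace K] [CompactSpace K] [T2Space K] [Nonempty K]
    [MeasurableSpace K] [BorelSpace K] [MulAction G K],
    Continuous (fun p : G × K => p.1 • p.2) →
    ∃ μ : MeasureTheory.ProbabilityMeasure K,
      ∀ g : G, MeasureTheory.Measure.map (fun x : K => g • x) μ.toMeasure = μ.toMeasure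

open MeasureTheory Topology Filter CompactlySupported

section FixedPoints

variable {X : Type*} [TopologicalSpace X]

theorem MulAction.isClosed_fixedPoints {M : Type*} [Monoid M] [MulAction M X]
    [ContinuousConstSMul M X] [T2Space X] : IsClosed (fixedPoints M X) := by
  rw [fixedPoints, Set.ofPred_forall]
  exact isClosed_iInter fun m => isClosed_eq (continuous_const_smul m) continuous_id

instance {G : Type*} [Group G] [MulAction G X] [TopologicalSpace G] [SeparatelyContinuousMul G] [ContinuousSMul G X] {N : Subgroup G}
    [N.Normal] : ContinuousSMul (G ⧸ N) (MulAction.fixedPoints N X) where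
  continuous_smul := by
    rw [← (QuotientGroup.isOpenQuotientMap_mk.prodMap IsOpenQuotientMap.id).continuous_comp_iff]
    exact (continuous_smul.comp (continuous_fst.prodMk
      (continuous_subtype_val.comp continuous_snd))).subtype_mk _

end FixedPoints

theorem WeakDual.continuous_apply_of_norm_le {𝕜 E X : Type*} [NontriviallyNormedField 𝕜]
    [NormedAddCommGroup E] [NormedSpace 𝕜 E] [TopologicalSpace X]
    {v : X → WeakDual 𝕜 E} {u : X → E} (hv : Continuous v) (hu : Continuous u) {C : ℝ}
    (hC : ∀ x, ‖toStrongDual (v x)‖ ≤ C) : Continuous fun x => v x (u x) := by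
  refine continuous_iff_continuousAt.2 fun x₀ => ?_
  have hnear : Tendsto (fun x => v x (u x - u x₀)) (𝓝 x₀) (𝓝 0) := by
    refine squeeze_zero_norm (fun x => (toStrongDual (v x)).le_of_opNorm_le (hC x) _) ?_
    have hdist : Continuous fun x => ‖u x - u x₀‖ := (hu.sub continuous_const).norm
    simpa using (hdist.tendsto x₀).const_mul C
  have hfar : Tendsto (fun x => v x (u x₀)) (𝓝 x₀) (𝓝 (v x₀ (u x₀))) :=
    ((eval_continuous (u x₀)).comp hv).tendsto x₀
  simpa [ContinuousAt] using hnear.add hfar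

section StateSpace

variable (K : Type*) [TopologicalSpace K]

def stateSpace : Set (WeakDual ℝ C(K, ℝ)) :=
  {φ | (∀ f, 0 ≤ f → 0 ≤ φ f) ∧ φ 1 = 1}

variable {K}

theorem evalCLM_mem_stateSpace (x : K) : ContinuousMap.evalCLM ℝ x ∈ stateSpace K :=
  ⟨fun _ hf => hf x, rfl⟩

instance [Nonempty K] : Nonempty (stateSpace K) :=
  ⟨⟨_, evalCLM_mem_stateSpace (Classical.arbitrary K)⟩⟩

variable [CompactSpace K]

theorem norm_apply_le_of_mem_stateSpace {φ : WeakDual ℝ C(K, ℝ)} (hφ : φ ∈ stateSpace K)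
    (f : C(K, ℝ)) : ‖φ f‖ ≤ ‖f‖ := by
  have hmono : Monotone φ := fun f g hfg => by
    simpa using hφ.1 (g - f) (sub_nonneg.2 hfg)
  have hbound : ∀ x, |f x| ≤ ‖f‖ := fun x => by simpa using f.norm_coe_le_norm x
  have hlower := hmono (show -(‖f‖ • 1) ≤ f from fun x => by simpa using (abs_le.1 (hbound x)).1)
  have hupper := hmono (show f ≤ ‖f‖ • 1 from fun x => by simpa using (abs_le.1 (hbound x)).2)
  simp only [map_neg, map_smul, hφ.2, smul_eq_mul, mul_one] at hlower hupper
  exact abs_le.2 ⟨hlower, hupper⟩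

theorem norm_toStrongDual_le_one_of_mem_stateSpace {φ : WeakDual ℝ C(K, ℝ)}
    (hφ : φ ∈ stateSpace K) : ‖WeakDual.toStrongDual φ‖ ≤ 1 :=
  ContinuousLinearMap.opNorm_le_bound _ zero_le_one fun f => by
    simpa using norm_apply_le_of_mem_stateSpace hφ f

theorem isCompact_stateSpace : IsCompact (stateSpace K) := by
  have hclosed : IsClosed (stateSpace K) := by
    have : stateSpace K = (⋂ (f : C(K, ℝ)) (_ : 0 ≤ f), {φ | 0 ≤ φ f}) ∩ {φ | φ 1 = 1} := by
      ext; simp [stateSpace]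
    rw [this]
    exact (isClosed_biInter fun f _ =>
      isClosed_le continuous_const (WeakDual.eval_continuous f)).inter
        (isClosed_eq (WeakDual.eval_continuous 1) continuous_const)
  refine (WeakDual.isCompact_closedBall (𝕜 := ℝ) 0 1).of_isClosed_subset hclosed fun φ hφ => ?_
  simpa using norm_toStrongDual_le_one_of_mem_stateSpace hφ

instance : CompactSpace (stateSpace K) := isCompact_iff_compactSpace.1 isCompact_stateSpace

theorem exists_state_apply_eq_integral {T : Type*} [TopologicalSpace T] [MeasurableSpace T]
    [OpensMeasurableSpace T] {ι : T → stateSpace K} (hι : Continuous ι) (m : Measure T)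
    [IsProbabilityMeasure m] :
    ∃ ψ : stateSpace K, ∀ f, (ψ : WeakDual ℝ C(K, ℝ)) f = ∫ t, (ι t : WeakDual ℝ C(K, ℝ)) f ∂m := by
  have hbound (f : C(K, ℝ)) (t : T) : ‖(ι t : WeakDual ℝ C(K, ℝ)) f‖ ≤ ‖f‖ :=
    norm_apply_le_of_mem_stateSpace (ι t).2 f
  have hint (f : C(K, ℝ)) : Integrable (fun t => (ι t : WeakDual ℝ C(K, ℝ)) f) m :=
    .of_bound ((WeakDual.eval_continuous f).comp
      (continuous_subtype_val.comp hι)).aestronglyMeasurable ‖f‖ (.of_forall (hbound f))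
  let ψ : C(K, ℝ) →ₗ[ℝ] ℝ :=
    { toFun f := ∫ t, (ι t : WeakDual ℝ C(K, ℝ)) f ∂m
      map_add' f g := by simp only [map_add]; exact integral_add (hint f) (hint g)
      map_smul' c f := by
        simp only [map_smul, smul_eq_mul, RingHom.id_apply]
        exact integral_const_mul c _ }
  refine ⟨⟨ψ.mkContinuous 1 fun f => ?_, ?_, ?_⟩, fun f => rfl⟩
  · simpa [ψ] using norm_integral_le_of_norm_le_const (μ := m) (.of_forall (hbound f))
  · exact fun f hf => integral_nonneg fun t => (ι t).2.1 f hf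
  · show ∫ t, (ι t : WeakDual ℝ C(K, ℝ)) 1 ∂m = 1
    simp [(ι _).2.2]

end StateSpace

section Translation

variable {K : Type*} [TopologicalSpace K]
  {G : Type*} [Group G] [MulAction G K] [ContinuousConstSMul G K]

def compSMulCLM (g : G) : C(K, ℝ) →L[ℝ] C(K, ℝ) :=
  ContinuousMap.compCLM (R := ℝ) ℝ ⟨(g • ·), continuous_const_smul g⟩

@[simp]
theorem compSMulCLM_apply (g : G) (f : C(K, ℝ)) (x : K) : compSMulCLM g f x = f (g • x) := rfl

theorem comp_compSMulCLM_mem_stateSpace {φ : WeakDual ℝ C(K, ℝ)} (hφ : φ ∈ stateSpace K) (g : G) :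
    φ.comp (compSMulCLM g) ∈ stateSpace K :=
  ⟨fun _ hf => hφ.1 _ fun x => hf (g • x), hφ.2⟩

instance : MulAction G (stateSpace K) where
  smul g φ := ⟨(φ : WeakDual ℝ C(K, ℝ)).comp (compSMulCLM g), comp_compSMulCLM_mem_stateSpace φ.2 g⟩
  one_smul φ := Subtype.ext <| ContinuousLinearMap.ext fun f => by
    change (φ : WeakDual ℝ C(K, ℝ)) (compSMulCLM 1 f) = _
    congr 1; ext; simp
  mul_smul g h φ := Subtype.ext <| ContinuousLinearMap.ext fun f => by
    change (φ : WeakDual ℝ C(K, ℝ)) (compSMulCLM (g * h) f)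
      = (φ : WeakDual ℝ C(K, ℝ)) (compSMulCLM h (compSMulCLM g f))
    congr 1; ext; simp [mul_smul]

@[simp]
theorem coe_smul_stateSpace_apply (g : G) (φ : stateSpace K) (f : C(K, ℝ)) :
    ((g • φ : stateSpace K) : WeakDual ℝ C(K, ℝ)) f = (φ : WeakDual ℝ C(K, ℝ)) (compSMulCLM g f) :=
  rfl

variable [TopologicalSpace G] [ContinuousSMul G K]

theorem continuous_compSMulCLM_apply (f : C(K, ℝ)) : Continuous fun g : G => compSMulCLM g f :=
  (ContinuousMap.curry (f.comp ⟨fun p : G × K => p.1 • p.2, continuous_smul⟩)).continuous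

instance [CompactSpace K] : ContinuousSMul G (stateSpace K) where
  continuous_smul := by
    refine Continuous.subtype_mk (WeakDual.continuous_of_continuous_eval fun f => ?_) _
    change Continuous fun p : G × stateSpace K => (p.2 : WeakDual ℝ C(K, ℝ)) (compSMulCLM p.1 f)
    exact WeakDual.continuous_apply_of_norm_le (continuous_subtype_val.comp continuous_snd)
      ((continuous_compSMulCLM_apply f).comp continuous_fst)
      fun p => norm_toStrongDual_le_one_of_mem_stateSpace p.2.2

end Translation

section InvariantState

variable {K : Type} [TopologicalSpace K] [CompactSpace K]
  {G : Type*} [Group G] [MulAction G K] [ContinuousConstSMul G K]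

theorem IsAmenable.exists_state_forall_smul_eq {H : Type*} [Group H] [TopologicalSpace H]
    (hH : IsAmenable H) {T : Type} [TopologicalSpace T] [CompactSpace T] [T2Space T] [Nonempty T]
    [MulAction H T] [ContinuousSMul H T] {ι : T → stateSpace K} (hι : Continuous ι) :
    ∃ ψ : stateSpace K, ∀ (h : H) (g : G), (∀ t, ι (h • t) = g • ι t) → g • ψ = ψ := by
  borelize T
  obtain ⟨m, hm⟩ := hH T continuous_smul
  obtain ⟨ψ, hψ⟩ := exists_state_apply_eq_integral hι m.toMeasure
  refine ⟨ψ, fun h g hhg => Subtype.ext <| ContinuousLinearMap.ext fun f => ?_⟩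
  have hint : AEStronglyMeasurable (fun t => (ι t : WeakDual ℝ C(K, ℝ)) f)
      (m.toMeasure.map (h • ·)) :=
    ((WeakDual.eval_continuous f).comp (continuous_subtype_val.comp hι)).aestronglyMeasurable
  calc ((g • ψ : stateSpace K) : WeakDual ℝ C(K, ℝ)) f
      = ∫ t, (ι (h • t) : WeakDual ℝ C(K, ℝ)) f ∂m := by simp [hψ, hhg]
    _ = ∫ t, (ι t : WeakDual ℝ C(K, ℝ)) f ∂(m.toMeasure.map (h • ·)) :=
      (integral_map (continuous_const_smul h).aemeasurable hint).symm
    _ = (ψ : WeakDual ℝ C(K, ℝ)) f := by rw [hm h, hψ]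

variable [T2Space K] [MeasurableSpace K] [BorelSpace K]

theorem exists_probabilityMeasure_map_smul_eq_of_smul_eq {ψ : stateSpace K}
    (hψ : ∀ g : G, g • ψ = ψ) :
    ∃ μ : ProbabilityMeasure K, ∀ g : G, (μ : Measure K).map (g • ·) = μ := by
  let Λ : C_c(K, ℝ) →ₚ[ℝ] ℝ := PositiveLinearMap.mk₀
    { toFun f := (ψ : WeakDual ℝ C(K, ℝ)) f
      map_add' f g := map_add (ψ : WeakDual ℝ C(K, ℝ)) (f : C(K, ℝ)) g
      map_smul' c f := map_smul (ψ : WeakDual ℝ C(K, ℝ)) c (f : C(K, ℝ)) }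
    fun f hf => ψ.2.1 f hf
  let μ := RealRMK.rieszMeasure Λ
  have hμ (f : C(K, ℝ)) : ∫ x, f x ∂μ = (ψ : WeakDual ℝ C(K, ℝ)) f :=
    RealRMK.integral_rieszMeasure Λ (CompactlySupportedContinuousMap.continuousMapEquiv f)
  have : IsProbabilityMeasure μ := isProbabilityMeasure_iff_real.2 (by simpa [ψ.2.2] using hμ 1)
  refine ⟨⟨μ, this⟩, fun g => ?_⟩
  change μ.map (Homeomorph.smul g) = μ
  have := Measure.Regular.map (μ := μ) (Homeomorph.smul g)
  refine Measure.ext_of_integral_eq_on_compactlySupported fun f => ?_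
  rw [integral_map (Homeomorph.smul g).continuous.aemeasurable
    (map_continuous f).aestronglyMeasurable]
  calc ∫ x, f (g • x) ∂μ = ((g • ψ : stateSpace K) : WeakDual ℝ C(K, ℝ)) f := hμ (compSMulCLM g f)
    _ = ∫ x, f x ∂μ := by rw [hψ g, ← hμ f]; rfl

end InvariantState

theorem isAmenable_of_closed_normal_extension_general {G : Type*} [Group G] [TopologicalSpace G]
    [IsTopologicalGroup G] (N : Subgroup G) [N.Normal]
    (hN : IsAmenable N) (hQ : IsAmenable (G ⧸ N)) : IsAmenable G := by
  intro K _ _ _ _ _ _ _ hc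
  have : ContinuousSMul G K := ⟨hc⟩
  obtain ⟨ψ₀, hψ₀⟩ := hN.exists_state_forall_smul_eq (G := G) (T := stateSpace K) continuous_id
  have : Nonempty (MulAction.fixedPoints N (stateSpace K)) := ⟨⟨ψ₀, fun n => hψ₀ n n fun _ => rfl⟩⟩
  have : CompactSpace (MulAction.fixedPoints N (stateSpace K)) :=
    isCompact_iff_compactSpace.1 MulAction.isClosed_fixedPoints.isCompact
  obtain ⟨ψ, hψ⟩ := hQ.exists_state_forall_smul_eq (G := G)
    (T := MulAction.fixedPoints N (stateSpace K)) continuous_subtype_val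
  exact exists_probabilityMeasure_map_smul_eq_of_smul_eq fun g => hψ g g fun _ => rfl

/-- Extension of amenability: if a closed normal subgroup N and the quotient G/N are
amenable, then G is amenable. -/
theorem isAmenable_of_closed_normal_extension {G : Type*} [Group G] [TopologicalSpace G]
    [IsTopologicalGroup G] (N : Subgroup G) [N.Normal] (hclosed : IsClosed (N : Set G))
    (hN : IsAmenable N) (hQ : IsAmenable (G ⧸ N)) : IsAmenable G :=
  isAmenable_of_closed_normal_extension_general N hN hQ
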